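/- arXiv:2506.03531 — 5 statements merged into one kernel-verified Lean document; each statement's English description precedes it below -/
import Mathlib

section
/- Let N ≥ 1 and let S_1, …, S_{N+1} be real-valued random variables on a probability space (Ω, 𝓕, μ) such that the family (S_1, …, S_{N+1}) is exchangeable. Let α ∈ (0,1), set k = ⌈(1 − α)(N + 1)⌉, and assume k ≤ N. Define the random variable q̂(ω) to be the k-th order statistic of the N values S_1(ω), …, S_N(ω). Then μ( S_{N+1} ≤ q̂ ) ≥ 1 − α. -/
/-!
Call score `i` *covered* if it is at most the `k`-th order statistic of all `N + 1` scores.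
At every outcome at least `k` of the `N + 1` scores are covered, so the covering probabilities
sum to at least `k`; by exchangeability they are all equal, hence each is at least
`k / (N + 1) ≥ 1 - α`. Dropping the test score from the list can only raise the `k`-th order
statistic, so the covered event for the test score lies inside the coverage event.
-/

open MeasureTheory

/-- A finite family of random variables is exchangeable if its joint law is invariant
under permutations of the indices. -/
def Exchangeable {Ω E : Type*} [MeasurableSpace Ω] [MeasurableSpace E]
    (μ : Measure Ω) {M : ℕ} (Z : Fin M → Ω → E) : Prop :=
  ∀ σ : Equiv.Perm (Fin M),
    Measure.map (fun ω => fun i => Z (σ i) ω) μ = Measure.map (fun ω => fun i => Z i ω) μ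

/-- The `k`-th order statistic (1-indexed, counted with multiplicity) of the values
`s 0, …, s (m-1)`: the least `x` such that at least `k` of the values are `≤ x`. -/
noncomputable def orderStat {m : ℕ} (s : Fin m → ℝ) (k : ℕ) : ℝ :=
  sInf {x : ℝ | k ≤ (Finset.univ.filter fun i => s i ≤ x).card}

open Finset
open scoped ENNReal

lemma isClosed_setOf_le_card_filter_le {X ι : Type*} [TopologicalSpace X] [Fintype ι]
    {f : ι → X → ℝ} {g : X → ℝ} (hf : ∀ i, Continuous (f i)) (hg : Continuous g) (k : ℕ) :
    IsClosed {p | k ≤ #{i | f i p ≤ g p}} := by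
  have hunion : {p | k ≤ #{i | f i p ≤ g p}} =
      ⋃ T : Finset ι, ⋃ (_ : #T = k), ⋂ i ∈ T, {p | f i p ≤ g p} := by
    ext p
    simp only [Set.mem_ofPred_eq, le_card_iff_exists_subset_card, subset_iff, mem_filter_univ,
      Set.mem_iUnion, Set.mem_iInter, exists_prop]
    exact exists_congr fun T => and_comm
  rw [hunion]
  exact isClosed_iUnion_of_finite fun T => isClosed_iUnion_of_finite fun _ =>
    isClosed_biInter fun i _ => isClosed_le (hf i) hg

section OrderStat

variable {m k : ℕ}

lemma bddBelow_setOf_le_card_filter_le (s : Fin m → ℝ) (hk : 1 ≤ k) :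
    BddBelow {x | k ≤ #{i | s i ≤ x}} := by
  obtain ⟨a, ha⟩ := (Set.finite_range s).bddBelow
  refine ⟨a, fun x hx => ?_⟩
  obtain ⟨i, hi⟩ : ({i | s i ≤ x} : Finset (Fin m)).Nonempty :=
    card_pos.mp (by rw [Set.mem_ofPred_eq] at hx; omega)
  exact (ha (Set.mem_range_self i)).trans ((mem_filter_univ i).mp hi)

lemma le_card_filter_le_orderStat (s : Fin m → ℝ) (hk : 1 ≤ k) (hkm : k ≤ m) :
    k ≤ #{i | s i ≤ orderStat s k} := by
  obtain ⟨b, hb⟩ := (Set.finite_range s).bddAbove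
  have hne : {x | k ≤ #{i | s i ≤ x}}.Nonempty :=
    ⟨b, by simpa [filter_true_of_mem fun i _ => hb (Set.mem_range_self i)] using hkm⟩
  exact (isClosed_setOf_le_card_filter_le (fun i => continuous_const) continuous_id k).csInf_mem
    hne (bddBelow_setOf_le_card_filter_le s hk)

lemma orderStat_le_iff (s : Fin m → ℝ) (hk : 1 ≤ k) (hkm : k ≤ m) {x : ℝ} :
    orderStat s k ≤ x ↔ k ≤ #{i | s i ≤ x} := by
  refine ⟨fun h => (le_card_filter_le_orderStat s hk hkm).trans (card_le_card ?_),
    fun h => csInf_le ?_ h⟩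
  · exact fun i => by simpa only [mem_filter_univ] using fun hi => hi.trans h
  · exact bddBelow_setOf_le_card_filter_le s hk

lemma orderStat_le_orderStat_comp {n : ℕ} (s : Fin m → ℝ) {e : Fin n → Fin m}
    (he : Function.Injective e) (hk : 1 ≤ k) (hkn : k ≤ n) :
    orderStat s k ≤ orderStat (s ∘ e) k := by
  rw [orderStat_le_iff s hk (hkn.trans (Fin.le_of_injective e he))]
  exact (le_card_filter_le_orderStat (s ∘ e) hk hkn).trans
    (card_le_card_of_injOn e (fun i hi => by simpa using hi) he.injOn)

lemma orderStat_comp_perm (s : Fin m → ℝ) (σ : Equiv.Perm (Fin m)) :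
    orderStat (s ∘ σ) k = orderStat s k := by
  unfold orderStat
  congr! 3 with x
  rw [card_equiv σ (t := {i | s i ≤ x}) (by simp)]

lemma measurable_orderStat (hk : 1 ≤ k) (hkm : k ≤ m) :
    Measurable fun s : Fin m → ℝ => orderStat s k := by
  refine measurable_of_Iic fun x => ?_
  have hpre : (fun s : Fin m → ℝ => orderStat s k) ⁻¹' Set.Iic x = {s | k ≤ #{i | s i ≤ x}} :=
    Set.ext fun s => orderStat_le_iff s hk hkm
  rw [hpre]
  exact (isClosed_setOf_le_card_filter_le continuous_apply continuous_const k).measurableSet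

end OrderStat

lemma natCast_le_sum_measure_of_le_card {Ω ι : Type*} [MeasurableSpace Ω] {μ : Measure Ω}
    [IsProbabilityMeasure μ] [Fintype ι] {P : ι → Ω → Prop} [∀ i ω, Decidable (P i ω)]
    (hP : ∀ i, MeasurableSet {ω | P i ω}) {k : ℕ} (hk : ∀ ω, k ≤ #{i | P i ω}) :
    (k : ℝ≥0∞) ≤ ∑ i, μ {ω | P i ω} := by
  calc (k : ℝ≥0∞) = ∫⁻ _, (k : ℝ≥0∞) ∂μ := by simp
    _ ≤ ∫⁻ ω, ∑ i, {ω | P i ω}.indicator 1 ω ∂μ := lintegral_mono fun ω => by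
        simpa [Set.indicator_apply, sum_boole] using hk ω
    _ = ∑ i, μ {ω | P i ω} := by
        rw [lintegral_finsetSum _ fun i _ => measurable_one.indicator (hP i)]
        simp only [lintegral_indicator_one (hP _)]

section Exchangeable

variable {Ω : Type*} [MeasurableSpace Ω] {μ : Measure Ω}

lemma Exchangeable.measure_preimage_comp_perm {E : Type*} [MeasurableSpace E] {M : ℕ}
    {Z : Fin M → Ω → E} (hZ : Exchangeable μ Z) (hmeas : ∀ i, Measurable (Z i))
    (σ : Equiv.Perm (Fin M)) {B : Set (Fin M → E)} (hB : MeasurableSet B) :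
    μ ((fun ω i => Z (σ i) ω) ⁻¹' B) = μ ((fun ω i => Z i ω) ⁻¹' B) := by
  rw [← Measure.map_apply (by fun_prop) hB, ← Measure.map_apply (by fun_prop) hB, hZ σ]

variable {M k : ℕ} {S : Fin M → Ω → ℝ}

lemma Exchangeable.measure_le_orderStat_eq (hS : Exchangeable μ S)
    (hmeas : ∀ i, Measurable (S i)) (hk : 1 ≤ k) (hkM : k ≤ M) (i j : Fin M) :
    μ {ω | S i ω ≤ orderStat (fun l => S l ω) k} =
      μ {ω | S j ω ≤ orderStat (fun l => S l ω) k} := by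
  have hB : MeasurableSet {v : Fin M → ℝ | v j ≤ orderStat v k} :=
    measurableSet_le (measurable_pi_apply j) (measurable_orderStat hk hkM)
  have hi := hS.measure_preimage_comp_perm hmeas (Equiv.swap i j) hB
  simp only [Set.preimage_ofPred_eq, Equiv.swap_apply_right] at hi
  have hperm (ω : Ω) :
      orderStat (fun l => S (Equiv.swap i j l) ω) k = orderStat (fun l => S l ω) k :=
    orderStat_comp_perm (fun l => S l ω) _
  simpa only [hperm] using hi

lemma Exchangeable.div_le_measure_le_orderStat [IsProbabilityMeasure μ]
    (hS : Exchangeable μ S) (hmeas : ∀ i, Measurable (S i)) (hk : 1 ≤ k) (hkM : k ≤ M)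
    (j : Fin M) : (k : ℝ≥0∞) / M ≤ μ {ω | S j ω ≤ orderStat (fun l => S l ω) k} := by
  refine ENNReal.div_le_of_le_mul' ?_
  calc (k : ℝ≥0∞) ≤ ∑ i, μ {ω | S i ω ≤ orderStat (fun l => S l ω) k} :=
        natCast_le_sum_measure_of_le_card
          (fun i => measurableSet_le (hmeas i) ((measurable_orderStat hk hkM).comp (by fun_prop)))
          fun ω => le_card_filter_le_orderStat _ hk hkM
    _ = M * μ {ω | S j ω ≤ orderStat (fun l => S l ω) k} := by
        simp [hS.measure_le_orderStat_eq hmeas hk hkM _ j]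

end Exchangeable

theorem conformal_marginal_coverage_general
    {Ω : Type*} [MeasurableSpace Ω] (μ : Measure Ω) [IsProbabilityMeasure μ]
    (N : ℕ)
    (S : Fin (N + 1) → Ω → ℝ) (hSmeas : ∀ i, Measurable (S i))
    (hexch : Exchangeable μ S)
    (α : ℝ) (hα1 : α < 1)
    (k : ℕ) (hk : k = ⌈(1 - α) * (N + 1 : ℝ)⌉₊) (hkN : k ≤ N) :
    ENNReal.ofReal (1 - α) ≤
      μ {ω | S (Fin.last N) ω ≤ orderStat (fun i : Fin N => S i.castSucc ω) k} := by
  have hk1 : 1 ≤ k := hk ▸ Nat.one_le_ceil_iff.mpr (mul_pos (sub_pos.mpr hα1) (by positivity))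
  calc ENNReal.ofReal (1 - α) ≤ (k : ℝ≥0∞) / (N + 1 : ℕ) := by
        rw [← ENNReal.ofReal_natCast, ← ENNReal.ofReal_natCast,
          ← ENNReal.ofReal_div_of_pos (by positivity)]
        refine ENNReal.ofReal_le_ofReal ((le_div_iff₀ (by positivity)).mpr ?_)
        exact_mod_cast hk ▸ Nat.le_ceil _
    _ ≤ μ {ω | S (Fin.last N) ω ≤ orderStat (fun i => S i ω) k} :=
        hexch.div_le_measure_le_orderStat hSmeas hk1 (by omega) _
    _ ≤ _ := measure_mono fun ω hω =>
        hω.trans (orderStat_le_orderStat_comp _ (Fin.castSucc_injective N) hk1 hkN)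

/-- Marginal coverage guarantee of split conformal prediction: for exchangeable scores
`S 1, …, S (N+1)`, the last score is at most the `⌈(1-α)(N+1)⌉`-th order statistic of the
first `N` scores with probability at least `1 - α`. -/
theorem conformal_marginal_coverage
    {Ω : Type*} [MeasurableSpace Ω] (μ : Measure Ω) [IsProbabilityMeasure μ]
    (N : ℕ) (hN : 1 ≤ N)
    (S : Fin (N + 1) → Ω → ℝ) (hSmeas : ∀ i, Measurable (S i))
    (hexch : Exchangeable μ S)
    (α : ℝ) (hα0 : 0 < α) (hα1 : α < 1)
    (k : ℕ) (hk : k = ⌈(1 - α) * (N + 1 : ℝ)⌉₊) (hkN : k ≤ N) :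
    ENNReal.ofReal (1 - α) ≤
      μ {ω | S (Fin.last N) ω ≤ orderStat (fun i : Fin N => S i.castSucc ω) k} :=
  conformal_marginal_coverage_general μ N S hSmeas hexch α hα1 k hk hkN
end

section
/- Let N ≥ 1 and let S_1, …, S_{N+1} be real-valued random variables on a probability space (Ω, 𝓕, μ) such that the family (S_1, …, S_{N+1}) is exchangeable. For every k ∈ {1, …, N+1}, let T_k(ω) denote the k-th order statistic of all N+1 values S_1(ω), …, S_{N+1}(ω). Then μ( S_{N+1} ≤ T_k ) ≥ k/(N+1). -/
open MeasureTheory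
open scoped ENNReal

/-!
Let `r_j(ω)` be the number of scores strictly smaller than `S_j(ω)`. For every `ω` at least `k`
indices satisfy `r_j(ω) < k` (ties only help), so `∑_j μ(r_j < k) ≥ k`. Exchangeability makes
all these probabilities equal, and `S_{N+1} ≤ T_k` holds exactly when `r_{N+1} < k`.
-/

open Finset

section StrictRank

variable {ι α : Type*} [Fintype ι] [LinearOrder α]

def strictRank (s : ι → α) (j : ι) : ℕ := #{i | s i < s j}

theorem strictRank_comp_perm (s : ι → α) (σ : Equiv.Perm ι) (j : ι) :
    strictRank (fun i => s (σ i)) j = strictRank s (σ j) :=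
  card_equiv σ fun i => by simp

theorem le_card_strictRank_lt (s : ι → α) {k : ℕ} (hk : k ≤ Fintype.card ι) :
    k ≤ #{j | strictRank s j < k} := by
  classical
  set J : Finset ι := {j | strictRank s j < k}
  by_contra! hJ
  -- a minimiser of `s` off `J` has only indices of `J` strictly below it, hence lies in `J`
  have hJc : Jᶜ.Nonempty := by
    rw [← card_pos, card_compl]
    omega
  obtain ⟨j, hjJ, hj_min⟩ := exists_min_image Jᶜ s hJc
  have hbelow : ({i | s i < s j} : Finset ι) ⊆ J := fun i hi => by
    by_contra hiJ
    exact (mem_filter.mp hi).2.not_ge (hj_min i (mem_compl.mpr hiJ))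
  have hj : strictRank s j < k := (card_le_card hbelow).trans_lt hJ
  exact mem_compl.mp hjJ (by simpa [J] using hj)

theorem measurable_strictRank [MeasurableSpace α] [TopologicalSpace α] [OrderClosedTopology α]
    [SecondCountableTopology α] [OpensMeasurableSpace α] (j : ι) :
    Measurable fun s : ι → α => strictRank s j := by
  simp only [strictRank, card_filter]
  exact Finset.measurable_sum _ fun i _ =>
    Measurable.ite (measurableSet_lt (measurable_pi_apply i) (measurable_pi_apply j))
      measurable_const measurable_const

end StrictRank

theorem le_orderStat_iff_strictRank_lt {m k : ℕ} (s : Fin m → ℝ) (j : Fin m) (hk_pos : 0 < k)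
    (hk : k ≤ m) :
    s j ≤ orderStat s k ↔ strictRank s j < k := by
  set X := {x : ℝ | k ≤ #{i | s i ≤ x}}
  have hX_nonempty : X.Nonempty := by
    obtain ⟨b, hb⟩ := (Set.finite_range s).bddAbove
    refine ⟨b, ?_⟩
    simp only [X, Set.mem_ofPred_eq, filter_true_of_mem fun i _ => hb (Set.mem_range_self i)]
    simpa using hk
  have hX_bdd : BddBelow X := by
    obtain ⟨a, ha⟩ := (Set.finite_range s).bddBelow
    refine ⟨a, fun x hx => ?_⟩
    obtain ⟨i, hi⟩ := card_pos.mp (hk_pos.trans_le hx)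
    exact (ha (Set.mem_range_self i)).trans (mem_filter.mp hi).2
  constructor
  · intro hj
    by_contra! hrank
    have hbelow : ({i | s i < s j} : Finset (Fin m)).Nonempty :=
      card_pos.mp (hk_pos.trans_le hrank)
    obtain ⟨i₀, hi₀, hi₀_max⟩ := exists_max_image _ s hbelow
    have hmem : s i₀ ∈ X := hrank.trans (card_le_card fun i hi => mem_filter.mpr
      ⟨mem_univ i, hi₀_max i hi⟩)
    exact (csInf_le hX_bdd hmem).trans_lt (mem_filter.mp hi₀).2 |>.not_ge hj
  · intro hrank
    refine le_csInf hX_nonempty fun x hx => ?_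
    by_contra! hxj
    have hsub : ({i | s i ≤ x} : Finset (Fin m)) ⊆ ({i | s i < s j} : Finset (Fin m)) :=
      fun i hi => mem_filter.mpr ⟨mem_univ i, (mem_filter.mp hi).2.trans_lt hxj⟩
    exact (hx.trans (card_le_card hsub)).not_gt hrank

theorem lintegral_card_mem_eq_sum_measure {Ω ι : Type*} [MeasurableSpace Ω] [Fintype ι]
    (μ : Measure Ω) {A : ι → Set Ω} [∀ ω i, Decidable (ω ∈ A i)]
    (hA : ∀ i, MeasurableSet (A i)) :
    ∫⁻ ω, (#{i | ω ∈ A i} : ℝ≥0∞) ∂μ = ∑ i, μ (A i) := by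
  calc ∫⁻ ω, (#{i | ω ∈ A i} : ℝ≥0∞) ∂μ
    _ = ∫⁻ ω, ∑ i, (A i).indicator 1 ω ∂μ := by simp [Set.indicator_apply]
    _ = ∑ i, ∫⁻ ω, (A i).indicator 1 ω ∂μ :=
        lintegral_finsetSum _ fun i _ => measurable_one.indicator (hA i)
    _ = ∑ i, μ (A i) := by simp only [lintegral_indicator_one (hA _)]

namespace Exchangeable

variable {Ω E : Type*} [MeasurableSpace Ω] [MeasurableSpace E] {μ : Measure Ω} {M : ℕ}
  {Z : Fin M → Ω → E}

theorem measure_preimage_perm (hZ : Exchangeable μ Z) (hZ_meas : ∀ i, Measurable (Z i))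
    (σ : Equiv.Perm (Fin M)) {B : Set (Fin M → E)} (hB : MeasurableSet B) :
    μ ((fun ω i => Z (σ i) ω) ⁻¹' B) = μ ((fun ω i => Z i ω) ⁻¹' B) := by
  rw [← Measure.map_apply (measurable_pi_lambda _ fun i => hZ_meas (σ i)) hB,
    ← Measure.map_apply (measurable_pi_lambda _ hZ_meas) hB, hZ σ]

variable [LinearOrder E] [TopologicalSpace E] [OrderClosedTopology E]
  [SecondCountableTopology E] [OpensMeasurableSpace E]

theorem measure_strictRank_lt_eq (hZ : Exchangeable μ Z) (hZ_meas : ∀ i, Measurable (Z i))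
    (i j : Fin M) (k : ℕ) :
    μ {ω | strictRank (fun l => Z l ω) i < k} =
      μ {ω | strictRank (fun l => Z l ω) j < k} := by
  have hB : MeasurableSet {v : Fin M → E | strictRank v j < k} :=
    measurableSet_lt (measurable_strictRank j) measurable_const
  have hswap : {ω | strictRank (fun l => Z l ω) i < k}
      = (fun ω l => Z (Equiv.swap i j l) ω) ⁻¹' {v | strictRank v j < k} := by
    ext ω
    simp [strictRank_comp_perm (fun l => Z l ω)]
  rw [hswap, hZ.measure_preimage_perm hZ_meas _ hB]
  rfl

theorem le_mul_measure_strictRank_lt [IsProbabilityMeasure μ] (hZ : Exchangeable μ Z)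
    (hZ_meas : ∀ i, Measurable (Z i)) {k : ℕ} (hk : k ≤ M) (j : Fin M) :
    (k : ℝ≥0∞) ≤ M * μ {ω | strictRank (fun l => Z l ω) j < k} := by
  set A : Fin M → Set Ω := fun i => {ω | strictRank (fun l => Z l ω) i < k}
  have hA : ∀ i, MeasurableSet (A i) := fun i =>
    measurableSet_lt ((measurable_strictRank i).comp (measurable_pi_lambda _ hZ_meas))
      measurable_const
  calc (k : ℝ≥0∞) = ∫⁻ _, (k : ℝ≥0∞) ∂μ := by simp
    _ ≤ ∫⁻ ω, (#{i | ω ∈ A i} : ℝ≥0∞) ∂μ := lintegral_mono fun ω =>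
        Nat.cast_le.mpr (le_card_strictRank_lt (fun l => Z l ω) (by simpa using hk))
    _ = ∑ i, μ (A i) := lintegral_card_mem_eq_sum_measure μ hA
    _ = M * μ (A j) := by
        simp [A, hZ.measure_strictRank_lt_eq hZ_meas _ j k]

end Exchangeable

theorem exchangeable_rank_inequality_general
    {Ω : Type*} [MeasurableSpace Ω] (μ : Measure Ω) [IsProbabilityMeasure μ]
    (N : ℕ)
    (S : Fin (N + 1) → Ω → ℝ) (hSmeas : ∀ i, Measurable (S i))
    (hexch : Exchangeable μ S)
    (k : ℕ) (hk2 : k ≤ N + 1) :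
    (k : ℝ≥0∞) / ((N : ℝ≥0∞) + 1) ≤
      μ {ω | S (Fin.last N) ω ≤ orderStat (fun i : Fin (N + 1) => S i ω) k} := by
  rcases Nat.eq_zero_or_pos k with rfl | hk_pos
  · simp
  have hevent : {ω | S (Fin.last N) ω ≤ orderStat (fun i => S i ω) k}
      = {ω | strictRank (fun i => S i ω) (Fin.last N) < k} :=
    Set.ext fun ω => le_orderStat_iff_strictRank_lt (fun i => S i ω) (Fin.last N) hk_pos hk2
  rw [hevent, ENNReal.div_le_iff_le_mul (.inl (by simp)) (.inl (by simp)), mul_comm]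
  exact_mod_cast hexch.le_mul_measure_strictRank_lt hSmeas hk2 (Fin.last N)

/-- Quantile/rank inequality for exchangeable real random variables: the last of `N+1`
exchangeable scores is at most the `k`-th order statistic of all `N+1` scores with
probability at least `k / (N+1)`. -/
theorem exchangeable_rank_inequality
    {Ω : Type*} [MeasurableSpace Ω] (μ : Measure Ω) [IsProbabilityMeasure μ]
    (N : ℕ) (hN : 1 ≤ N)
    (S : Fin (N + 1) → Ω → ℝ) (hSmeas : ∀ i, Measurable (S i))
    (hexch : Exchangeable μ S)
    (k : ℕ) (hk1 : 1 ≤ k) (hk2 : k ≤ N + 1) :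
    (k : ℝ≥0∞) / ((N : ℝ≥0∞) + 1) ≤
      μ {ω | S (Fin.last N) ω ≤ orderStat (fun i : Fin (N + 1) => S i ω) k} :=
  exchangeable_rank_inequality_general μ N S hSmeas hexch k hk2
end

section
/- Let N ≥ 1, let K ≥ 1, and let (S_1, G_1), …, (S_{N+1}, G_{N+1}) be random pairs on a probability space (Ω, 𝓕, μ), with S_i real-valued scores and G_i ∈ {1, …, K} group labels, such that the family ((S_1, G_1), …, (S_{N+1}, G_{N+1})) is exchangeable. Let α ∈ (0,1) and let g ∈ {1, …, K} satisfy μ(G_{N+1} = g) > 0. For each ω, let I(ω) = { i ∈ {1, …, N} : G_i(ω) = g }, let m(ω) = |I(ω)|, let k(ω) = ⌈(1 − α)(m(ω) + 1)⌉, and define the Mondrian coverage event E_g to consist of those ω such that either k(ω) > m(ω), or S_{N+1}(ω) is at most the k(ω)-th order statistic of the multiset { S_i(ω) : i ∈ I(ω) }. Then μ( E_g ∣ G_{N+1} = g ) ≥ 1 − α. -/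
open MeasureTheory

/-- The `k`-th order statistic (1-indexed, counted with multiplicity) of the multiset of
values `{s i : i ∈ I}`: the least `x` such that at least `k` of those values are `≤ x`. -/
noncomputable def orderStatOn {ι : Type*} (I : Finset ι) (s : ι → ℝ) (k : ℕ) : ℝ :=
  sInf {x : ℝ | k ≤ (I.filter fun i => s i ≤ x).card}

/-!
The sample fails when the test point lies in group `g` and strictly exceeds at least
`k = ⌈(1 - α)(m + 1)⌉` calibration scores of that group; otherwise the coverage event holds, since
`k > m` or the test score is at most the `k`-th order statistic. Swapping the test point with point `j` does
not change the law, so `(N + 1) μ(failure)` is the expected number of `j` whose swap makes the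
sample fail. If `n` points of the sample are in group `g`, such a `j` lies in the group and
strictly exceeds `⌈(1 - α) n⌉` of its members, and at most `n - ⌈(1 - α) n⌉ ≤ α n` members do.
Taking expectations, `μ(failure) ≤ α μ(G_{N+1} = g)`.
-/

open Finset
open scoped ENNReal

section OrderStatistic

variable {ι : Type*} (I : Finset ι) (s : ι → ℝ)

lemma le_orderStatOn_of_card_filter_lt {k : ℕ} (hk : k ≤ #I) {t : ℝ}
    (h : #{i ∈ I | s i < t} < k) : t ≤ orderStatOn I s k := by
  obtain ⟨M, hM⟩ := (I.image s).bddAbove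
  have hne : {x : ℝ | k ≤ #{i ∈ I | s i ≤ x}}.Nonempty := by
    refine ⟨M, ?_⟩
    rwa [Set.mem_ofPred_eq, filter_true_of_mem fun i hi => hM (mem_image_of_mem s hi)]
  refine le_csInf hne fun x hx => not_lt.1 fun hxt => h.not_ge (hx.trans (card_le_card ?_))
  intro i
  simp only [mem_filter]
  exact fun ⟨hiI, hi⟩ => ⟨hiI, hi.trans_lt hxt⟩

lemma card_lt_or_le_orderStatOn {k : ℕ} {t : ℝ} (h : #{i ∈ I | s i < t} < k) :
    #I < k ∨ t ≤ orderStatOn I s k :=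
  (lt_or_ge #I k).imp_right fun hk => le_orderStatOn_of_card_filter_lt I s hk h

end OrderStatistic

lemma card_filter_le_card_filter_lt_le_card_sub {ι α : Type*} [LinearOrder α] (J : Finset ι)
    (s : ι → α) (k : ℕ) : #{j ∈ J | k ≤ #{i ∈ J | s i < s j}} ≤ #J - k := by
  classical
  set A := {j ∈ J | k ≤ #{i ∈ J | s i < s j}}
  rcases A.eq_empty_or_nonempty with hA | hA
  · simp [hA]
  obtain ⟨j₀, hj₀, hmin⟩ := A.exists_min_image s hA
  set L := {i ∈ J | s i < s j₀}
  have hkL : k ≤ #L := (mem_filter.1 hj₀).2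
  have hdisj : Disjoint A L :=
    disjoint_left.2 fun a ha haL => (mem_filter.1 haL).2.not_ge (hmin a ha)
  have hAL := card_le_card (union_subset (filter_subset _ J) (filter_subset _ J) : A ∪ L ⊆ J)
  rw [card_union_of_disjoint hdisj] at hAL
  omega

lemma natCast_sub_ceil_one_sub_mul_le {α : ℝ} (hα : 0 ≤ α) (n : ℕ) :
    ((n - ⌈(1 - α) * n⌉₊ : ℕ) : ℝ) ≤ α * n := by
  rcases le_or_gt ⌈(1 - α) * n⌉₊ n with h | h
  · rw [Nat.cast_sub h]
    linarith [Nat.le_ceil ((1 - α) * n)]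
  · rw [Nat.sub_eq_zero_of_le h.le, Nat.cast_zero]
    positivity

lemma card_filter_castSucc_perm_add_ite {N : ℕ} (σ : Equiv.Perm (Fin (N + 1)))
    (P : Fin (N + 1) → Prop) [DecidablePred P] :
    #{i : Fin N | P (σ i.castSucc)} + (if P (σ (Fin.last N)) then 1 else 0) = #{i | P i} := by
  simp only [card_filter]
  rw [← Fin.sum_univ_castSucc (fun i => if P (σ i) then 1 else 0),
    Equiv.sum_comp σ (fun i => if P i then 1 else 0)]

lemma measurable_card_filter {δ ι : Type*} [MeasurableSpace δ] [Fintype ι] {p : ι → δ → Prop}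
    [∀ i z, Decidable (p i z)] (hp : ∀ i, MeasurableSet {z | p i z}) :
    Measurable fun z => #{i | p i z} := by
  simp only [card_filter]
  exact Finset.measurable_sum _ fun i _ => Measurable.ite (hp i) measurable_const measurable_const

section Exchangeable

variable {Ω E : Type*} [MeasurableSpace Ω] [MeasurableSpace E] {μ : Measure Ω} {M : ℕ}
  {Z : Fin M → Ω → E}

lemma Exchangeable.measure_preimage_perm_s7 (hZ : Exchangeable μ Z) (hZm : ∀ i, Measurable (Z i))
    (σ : Equiv.Perm (Fin M)) {B : Set (Fin M → E)} (hB : MeasurableSet B) :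
    μ ((fun ω i => Z (σ i) ω) ⁻¹' B) = μ ((fun ω i => Z i ω) ⁻¹' B) := by
  rw [← Measure.map_apply (measurable_pi_lambda _ fun i => hZm (σ i)) hB, hZ σ,
    Measure.map_apply (measurable_pi_lambda _ hZm) hB]

open scoped Classical in
lemma lintegral_card_filter_mem {ι : Type*} [Fintype ι] {s : ι → Set Ω}
    (hs : ∀ j, MeasurableSet (s j)) :
    ∫⁻ ω, (#{j | ω ∈ s j} : ℝ≥0∞) ∂μ = ∑ j, μ (s j) := by
  have hind (ω : Ω) : (#{j | ω ∈ s j} : ℝ≥0∞) = ∑ j, (s j).indicator 1 ω := by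
    simp only [Set.indicator_apply, Pi.one_apply, sum_boole]
  simp_rw [hind]
  rw [lintegral_finsetSum _ fun j _ => measurable_one.indicator (hs j)]
  exact sum_congr rfl fun j _ => lintegral_indicator_one (hs j)

open scoped Classical in
lemma Exchangeable.measure_preimage_le_mul {ι : Type*} [Fintype ι] [Nonempty ι]
    (hZ : Exchangeable μ Z) (hZm : ∀ i, Measurable (Z i)) (σ : ι → Equiv.Perm (Fin M))
    {A B : Set (Fin M → E)} (hA : MeasurableSet A) (hB : MeasurableSet B) (c : ℝ)
    (h : ∀ z : Fin M → E, (#{j | z ∘ σ j ∈ B} : ℝ≥0∞) ≤ ENNReal.ofReal c * #{j | z ∘ σ j ∈ A}) :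
    μ ((fun ω i => Z i ω) ⁻¹' B) ≤ ENNReal.ofReal c * μ ((fun ω i => Z i ω) ⁻¹' A) := by
  have hsum {C : Set (Fin M → E)} (hC : MeasurableSet C) :
      ∑ j, μ ((fun ω i => Z (σ j i) ω) ⁻¹' C) = Fintype.card ι * μ ((fun ω i => Z i ω) ⁻¹' C) := by
    simp only [hZ.measure_preimage_perm_s7 hZm _ hC, sum_const, card_univ, nsmul_eq_mul]
  have hmeas {C : Set (Fin M → E)} (hC : MeasurableSet C) (j : ι) :
      MeasurableSet ((fun ω i => Z (σ j i) ω) ⁻¹' C) :=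
    measurable_pi_lambda _ (fun i => hZm (σ j i)) hC
  refine (ENNReal.mul_le_mul_iff_right (Nat.cast_ne_zero.2 (Fintype.card_ne_zero (α := ι)))
    (ENNReal.natCast_ne_top _)).1 ?_
  calc (Fintype.card ι : ℝ≥0∞) * μ ((fun ω i => Z i ω) ⁻¹' B)
      = ∫⁻ ω, (#{j | ω ∈ (fun ω i => Z (σ j i) ω) ⁻¹' B} : ℝ≥0∞) ∂μ := by
        rw [lintegral_card_filter_mem (hmeas hB), hsum hB]
    _ ≤ ∫⁻ ω, ENNReal.ofReal c * (#{j | ω ∈ (fun ω i => Z (σ j i) ω) ⁻¹' A} : ℝ≥0∞) ∂μ :=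
        lintegral_mono fun ω => h fun i => Z i ω
    _ = Fintype.card ι * (ENNReal.ofReal c * μ ((fun ω i => Z i ω) ⁻¹' A)) := by
        rw [lintegral_const_mul' _ _ ENNReal.ofReal_ne_top, lintegral_card_filter_mem (hmeas hA),
          hsum hA, mul_left_comm]

end Exchangeable

lemma ofReal_one_sub_le_measure_sdiff_div {Ω : Type*} [MeasurableSpace Ω] {μ : Measure Ω}
    [IsFiniteMeasure μ] {s t : Set Ω} {α : ℝ} (hα : 0 ≤ α) (hs : μ s ≠ 0)
    (ht : μ t ≤ ENNReal.ofReal α * μ s) : ENNReal.ofReal (1 - α) ≤ μ (s \ t) / μ s := by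
  rw [ENNReal.le_div_iff_mul_le (Or.inl hs) (Or.inl (measure_ne_top μ s))]
  calc ENNReal.ofReal (1 - α) * μ s = μ s - ENNReal.ofReal α * μ s := by
        rw [ENNReal.ofReal_sub _ hα, ENNReal.ofReal_one,
          ENNReal.sub_mul fun _ _ => measure_ne_top μ s, one_mul]
    _ ≤ μ s - μ t := tsub_le_tsub_left ht _
    _ ≤ μ (s \ t) := le_measure_sdiff

section Mondrian

variable {β : Type*} [DecidableEq β] {N : ℕ}

def mondrianFailureSet (N : ℕ) (α : ℝ) (g : β) : Set (Fin (N + 1) → ℝ × β) :=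
  {z | (z (Fin.last N)).2 = g ∧
    ⌈(1 - α) * ((#{i : Fin N | (z i.castSucc).2 = g} : ℝ) + 1)⌉₊ ≤
      #{i : Fin N | (z i.castSucc).2 = g ∧ (z i.castSucc).1 < (z (Fin.last N)).1}}

lemma measurableSet_mondrianFailureSet [MeasurableSpace β] [MeasurableSingletonClass β]
    (α : ℝ) (g : β) : MeasurableSet (mondrianFailureSet N α g) := by
  have hgroup (j : Fin (N + 1)) : MeasurableSet {z : Fin (N + 1) → ℝ × β | (z j).2 = g} :=
    (measurable_pi_apply j).snd (measurableSet_singleton g)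
  have hcal : Measurable fun z : Fin (N + 1) → ℝ × β => #{i : Fin N | (z i.castSucc).2 = g} :=
    measurable_card_filter fun i => hgroup i.castSucc
  have hbelow : Measurable fun z : Fin (N + 1) → ℝ × β =>
      #{i : Fin N | (z i.castSucc).2 = g ∧ (z i.castSucc).1 < (z (Fin.last N)).1} :=
    measurable_card_filter fun i => (hgroup i.castSucc).inter <|
      measurableSet_lt (f := fun z : Fin (N + 1) → ℝ × β => (z i.castSucc).1)
        (g := fun z => (z (Fin.last N)).1) (measurable_pi_apply _).fst (measurable_pi_apply _).fst
  exact (hgroup _).inter <| measurableSet_le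
    ((measurable_from_top (f := fun m : ℕ => ⌈(1 - α) * ((m : ℝ) + 1)⌉₊)).comp hcal) hbelow

open scoped Classical in
lemma card_swap_mem_mondrianFailureSet_le {α : ℝ} (hα : 0 ≤ α) (g : β)
    (z : Fin (N + 1) → ℝ × β) :
    (#{j | z ∘ Equiv.swap j (Fin.last N) ∈ mondrianFailureSet N α g} : ℝ≥0∞) ≤
      ENNReal.ofReal α * #{j | z ∘ Equiv.swap j (Fin.last N) ∈ {z | (z (Fin.last N)).2 = g}} := by
  set J : Finset (Fin (N + 1)) := {j | (z j).2 = g}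
  have hA : #{j | z ∘ Equiv.swap j (Fin.last N) ∈ {z | (z (Fin.last N)).2 = g}} = #J := by
    congr 1; ext j; simp [J]
  have hB : ({j | z ∘ Equiv.swap j (Fin.last N) ∈ mondrianFailureSet N α g} : Finset _) ⊆
      {j ∈ J | ⌈(1 - α) * #J⌉₊ ≤ #{i ∈ J | (z i).1 < (z j).1}} := by
    intro j hj
    simp only [mondrianFailureSet, mem_filter, mem_univ, true_and, Set.mem_ofPred_eq,
      Function.comp_apply, Equiv.swap_apply_right] at hj
    obtain ⟨hjg, hk⟩ := hj
    have hcal : #{i : Fin N | (z (Equiv.swap j (Fin.last N) i.castSucc)).2 = g} + 1 = #J := by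
      simpa [hjg] using card_filter_castSucc_perm_add_ite (Equiv.swap j (Fin.last N))
        fun i => (z i).2 = g
    have hbelow : #{i : Fin N | (z (Equiv.swap j (Fin.last N) i.castSucc)).2 = g ∧
        (z (Equiv.swap j (Fin.last N) i.castSucc)).1 < (z j).1} = #{i ∈ J | (z i).1 < (z j).1} := by
      simpa [filter_filter, J] using card_filter_castSucc_perm_add_ite
        (Equiv.swap j (Fin.last N)) fun i => (z i).2 = g ∧ (z i).1 < (z j).1
    refine mem_filter.2 ⟨mem_filter.2 ⟨mem_univ j, hjg⟩, ?_⟩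
    rw [← hbelow, ← hcal]
    exact_mod_cast hk
  rw [hA]
  calc (#{j | z ∘ Equiv.swap j (Fin.last N) ∈ mondrianFailureSet N α g} : ℝ≥0∞)
      ≤ (#J - ⌈(1 - α) * #J⌉₊ : ℕ) := by
        exact_mod_cast (card_le_card hB).trans
          (card_filter_le_card_filter_lt_le_card_sub J (fun i => (z i).1) _)
    _ = ENNReal.ofReal (#J - ⌈(1 - α) * #J⌉₊ : ℕ) := (ENNReal.ofReal_natCast _).symm
    _ ≤ ENNReal.ofReal (α * #J) :=
        ENNReal.ofReal_le_ofReal (natCast_sub_ceil_one_sub_mul_le hα _)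
    _ = ENNReal.ofReal α * #J := by rw [ENNReal.ofReal_mul hα, ENNReal.ofReal_natCast]

end Mondrian

theorem mondrian_general_coverage_general
    {Ω : Type*} [MeasurableSpace Ω] (μ : Measure Ω) [IsProbabilityMeasure μ]
    (N : ℕ) (K : ℕ)
    (S : Fin (N + 1) → Ω → ℝ) (G : Fin (N + 1) → Ω → Fin K)
    (hSmeas : ∀ i, Measurable (S i)) (hGmeas : ∀ i, Measurable (G i))
    (hexch : Exchangeable μ (fun i ω => (S i ω, G i ω)))
    (α : ℝ) (hα0 : 0 < α)
    (g : Fin K) (hg : 0 < μ {ω | G (Fin.last N) ω = g}) :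
    ENNReal.ofReal (1 - α) ≤
      μ ({ω |
            (Finset.univ.filter fun i : Fin N => G i.castSucc ω = g).card <
              ⌈(1 - α) *
                (((Finset.univ.filter fun i : Fin N => G i.castSucc ω = g).card : ℝ) + 1)⌉₊ ∨
            S (Fin.last N) ω ≤
              orderStatOn (Finset.univ.filter fun i : Fin N => G i.castSucc ω = g)
                (fun i => S i.castSucc ω)
                ⌈(1 - α) *
                  (((Finset.univ.filter fun i : Fin N => G i.castSucc ω = g).card : ℝ) + 1)⌉₊}
          ∩ {ω | G (Fin.last N) ω = g}) /
        μ {ω | G (Fin.last N) ω = g} := by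
  set Z : Ω → Fin (N + 1) → ℝ × Fin K := fun ω i => (S i ω, G i ω)
  set F := Z ⁻¹' {z | (z (Fin.last N)).2 = g}
  have hfail : μ (Z ⁻¹' mondrianFailureSet N α g) ≤ ENNReal.ofReal α * μ F :=
    hexch.measure_preimage_le_mul (fun i => (hSmeas i).prodMk (hGmeas i))
      (fun j => Equiv.swap j (Fin.last N)) (A := {z | (z (Fin.last N)).2 = g})
      ((measurable_pi_apply _).snd (measurableSet_singleton g))
      (measurableSet_mondrianFailureSet α g) α
      -- `convert` only reconciles the `Decidable` instances of the two counts
      fun z => by convert card_swap_mem_mondrianFailureSet_le hα0.le g z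
  refine (ofReal_one_sub_le_measure_sdiff_div hα0.le hg.ne' hfail).trans
    (ENNReal.div_le_div_right (measure_mono ?_) _)
  rintro ω ⟨hωF, hωgood⟩
  refine ⟨?_, hωF⟩
  have hbelow : #{i : Fin N | G i.castSucc ω = g ∧ S i.castSucc ω < S (Fin.last N) ω} <
      ⌈(1 - α) * ((#{i : Fin N | G i.castSucc ω = g} : ℝ) + 1)⌉₊ :=
    not_le.1 fun h => hωgood ⟨hωF, h⟩
  rw [← filter_filter] at hbelow
  exact card_lt_or_le_orderStatOn _ _ hbelow

/-- General Mondrian conformal coverage guarantee (Theorem B.1): Mondrian conformal sets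
built from group-specific quantiles achieve coverage with probability at least `1 - α`
conditionally on each group `g` (among `K` groups) of positive probability. -/
theorem mondrian_general_coverage
    {Ω : Type*} [MeasurableSpace Ω] (μ : Measure Ω) [IsProbabilityMeasure μ]
    (N : ℕ) (hN : 1 ≤ N) (K : ℕ) (hK : 1 ≤ K)
    (S : Fin (N + 1) → Ω → ℝ) (G : Fin (N + 1) → Ω → Fin K)
    (hSmeas : ∀ i, Measurable (S i)) (hGmeas : ∀ i, Measurable (G i))
    (hexch : Exchangeable μ (fun i ω => (S i ω, G i ω)))
    (α : ℝ) (hα0 : 0 < α) (hα1 : α < 1)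
    (g : Fin K) (hg : 0 < μ {ω | G (Fin.last N) ω = g}) :
    ENNReal.ofReal (1 - α) ≤
      μ ({ω |
            (Finset.univ.filter fun i : Fin N => G i.castSucc ω = g).card <
              ⌈(1 - α) *
                (((Finset.univ.filter fun i : Fin N => G i.castSucc ω = g).card : ℝ) + 1)⌉₊ ∨
            S (Fin.last N) ω ≤
              orderStatOn (Finset.univ.filter fun i : Fin N => G i.castSucc ω = g)
                (fun i => S i.castSucc ω)
                ⌈(1 - α) *
                  (((Finset.univ.filter fun i : Fin N => G i.castSucc ω = g).card : ℝ) + 1)⌉₊}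
          ∩ {ω | G (Fin.last N) ω = g}) /
        μ {ω | G (Fin.last N) ω = g} :=
  mondrian_general_coverage_general μ N K S G hSmeas hGmeas hexch α hα0 g hg
end

section
/- Let t, a, L, U be real numbers with L ≤ t ≤ U. Then there exists δ ∈ ℝ with (δ = 0 or δ = 1) such that a ≥ t, a ≥ 0, a ≤ t − (1 − δ)·L, and a ≤ δ·U, if and only if a = max(t, 0). -/
/-- Exactness of the big-M mixed-integer formulation of a single ReLU neuron: with valid
pre-activation bounds `L ≤ t ≤ U`, the big-M system with binary indicator `δ` is feasible
iff the activation equals `max t 0`. -/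
theorem relu_bigM_exact (t a L U : ℝ) (hL : L ≤ t) (hU : t ≤ U) :
    (∃ δ : ℝ, (δ = 0 ∨ δ = 1) ∧
        t ≤ a ∧ 0 ≤ a ∧ a ≤ t - (1 - δ) * L ∧ a ≤ δ * U) ↔
      a = max t 0 := by
  constructor
  · rintro ⟨δ, (rfl | rfl), h1, h2, h3, h4⟩
    · simp only [zero_mul] at h4
      have ha : a = 0 := le_antisymm h4 h2
      have : t ≤ 0 := ha ▸ h1
      rw [ha, max_eq_right this]
    · simp only [sub_self, zero_mul, sub_zero] at h3
      have ha : a = t := le_antisymm h3 h1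
      rw [ha, max_eq_left (ha ▸ h2)]
  · rintro rfl
    rcases le_or_gt t 0 with h | h
    · exact ⟨0, Or.inl rfl, by rw [max_eq_right h]; refine ⟨h, le_refl _, by linarith, by simp⟩⟩
    · refine ⟨1, Or.inr rfl, ?_⟩
      rw [max_eq_left h.le]
      exact ⟨le_refl _, h.le, by linarith, by linarith⟩
end

section
/- Let 𝒦 be a finite set of classes partitioned into disjoint subsets 𝒦^des and 𝒦^und with 𝒦 = 𝒦^des ∪ 𝒦^und and 𝒦^des ∩ 𝒦^und = ∅. Let g : 𝒦 → ℝ (logits), q̂ ∈ ℝ, ε > 0, and M ∈ ℝ satisfy M ≥ −g(k) − q̂ and M ≥ g(k) + q̂ + ε for every k ∈ 𝒦. Assume the separation condition: for every k ∈ 𝒦, either −g(k) ≤ q̂ or −g(k) ≥ q̂ + ε. Then the following are equivalent: (a) there exists w : 𝒦 → ℝ such that for every k ∈ 𝒦, (w(k) = 0 or w(k) = 1), −g(k) − q̂ ≤ M·(1 − w(k)), and g(k) + q̂ + ε ≤ M·w(k), and moreover ∑_{k ∈ 𝒦^des} w(k) ≥ 1 and w(k) = 0 for every k ∈ 𝒦^und;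 (b) −g(k) ≥ q̂ + ε for every k ∈ 𝒦^und, and there exists k ∈ 𝒦^des with −g(k) ≤ q̂. -/
open scoped BigOperators

/-- Correctness of the big-M mixed-integer reformulation of the classification conformal
set constraints in C-MICL: the big-M system with binary inclusion indicators `w` is
feasible iff every undesired class is strictly excluded from the conformal set (up to
tolerance `ε`) and at least one desired class is included. -/
theorem classification_bigM_reformulation
    {K : Type*} [Fintype K] [DecidableEq K] (Kdes Kund : Finset K)
    (hunion : Kdes ∪ Kund = Finset.univ) (hdisj : Kdes ∩ Kund = ∅)
    (g : K → ℝ) (q ε M : ℝ) (hε : 0 < ε)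
    (hM1 : ∀ k, -g k - q ≤ M) (hM2 : ∀ k, g k + q + ε ≤ M)
    (hsep : ∀ k, -g k ≤ q ∨ q + ε ≤ -g k) :
    (∃ w : K → ℝ,
        (∀ k, w k = 0 ∨ w k = 1) ∧
        (∀ k, -g k - q ≤ M * (1 - w k)) ∧
        (∀ k, g k + q + ε ≤ M * w k) ∧
        1 ≤ ∑ k ∈ Kdes, w k ∧
        ∀ k ∈ Kund, w k = 0) ↔
      ((∀ k ∈ Kund, q + ε ≤ -g k) ∧ ∃ k ∈ Kdes, -g k ≤ q) := by
  constructor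
  · rintro ⟨w, hw01, hc1, hc2, hsum, hund⟩
    constructor
    · intro k hk
      have := hc2 k
      rw [hund k hk, mul_zero] at this
      linarith
    · -- some k ∈ Kdes with w k = 1
      by_contra h
      push_neg at h
      have hzero : ∀ k ∈ Kdes, w k = 0 := by
        intro k hk
        rcases hw01 k with h0 | h1
        · exact h0
        · exfalso
          have := hc1 k
          rw [h1] at this
          simp at this
          linarith [h k hk]
      have : ∑ k ∈ Kdes, w k = 0 := Finset.sum_eq_zero hzero
      linarith
  · rintro ⟨hund, k0, hk0, hk0le⟩
    refine ⟨fun k => if -g k ≤ q then 1 else 0, ?_, ?_, ?_, ?_, ?_⟩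
    · intro k; by_cases h : -g k ≤ q <;> simp [h]
    · intro k; by_cases h : -g k ≤ q
      · simp only [h, if_true]; linarith
      · simp only [h, if_false]; linarith [hM1 k]
    · intro k; by_cases h : -g k ≤ q
      · simp only [h, if_true]; linarith [hM2 k]
      · simp only [h, if_false]
        rcases hsep k with h' | h'
        · exact absurd h' h
        · linarith
    · calc (1:ℝ) = if -g k0 ≤ q then 1 else 0 := by simp [hk0le]
        _ ≤ ∑ k ∈ Kdes, if -g k ≤ q then 1 else 0 := by
            apply Finset.single_le_sum (f := fun k => if -g k ≤ q then (1:ℝ) else 0)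
              (fun k _ => by positivity) hk0
    · intro k hk
      have := hund k hk
      have : ¬(-g k ≤ q) := by linarith
      simp [this]
end
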